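/- Let A, B ∈ ℝ^{d×d} be symmetric with B positive definite and let P* maximize the trace ratio q(P) = tr(PᵀAP)/tr(PᵀBP) over orthonormal P ∈ ℝ^{d×p}. Then the columns of P* span an invariant subspace of H = A − q(P*)·B associated with its p largest eigenvalues; i.e., there exists a symmetric Λ ∈ ℝ^{p×p} with H P* = P* Λ and the eigenvalues of Λ are the p largest eigenvalues of H (in particular tr(Λ) = 0 equals the sum of the p largest eigenvalues of H). -/

import Mathlib

/-!
Put `Q = Vᵀ P*`, so `H = V diag(μ) Vᵀ` and `Π = Q Qᵀ` is an orthogonal projection with diagonal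
`π_i ∈ [0, 1]`, `∑ π_i = p` and `tr (P*ᵀ H P*) = ∑ μ_i π_i`. As `B` is positive definite,
maximality of `P*` reads `tr (Pᵀ H P) ≤ 0 = tr (P*ᵀ H P*)` for orthonormal `P`; testing with the top
`p` eigenvectors gives `∑_{i<p} μ_i ≤ ∑ μ_i π_i`. With the threshold `t = μ_{p-1}` each term of
`∑ (μ_i - t) (π_i - [i < p])` is `≤ 0` while the sum is `≥ 0` (bathtub principle), so
`π_i = [i < p]` whenever `μ_i ≠ t`. A projection with diagonal entry `1` (or `0`) has a unit (or
zero) row there, so `Π diag(μ - t)` is diagonal. Hence `Π` commutes with `diag μ`, which is the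
invariance, and the rows of `Q` at top eigenvalues `≠ t` are orthonormal; completing them to an
orthogonal `W` diagonalises `Qᵀ diag(μ) Q`, since the rows at eigenvalue `t` only contribute `t • 1`.
-/
open Matrix

section StarProjection

variable {n : Type*} [Fintype n] {R : Matrix n n ℝ}

theorem IsStarProjection.transpose_eq (hR : IsStarProjection R) : Rᵀ = R := by
  simpa [star_eq_conjTranspose] using hR.isSelfAdjoint.star_eq

theorem IsStarProjection.apply_symm (hR : IsStarProjection R) (i j : n) : R j i = R i j :=
  congrFun (congrFun hR.transpose_eq i) j

theorem IsStarProjection.sum_apply_sq_eq_diag (hR : IsStarProjection R) (i : n) :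
    ∑ j, R i j ^ 2 = R i i := by
  conv_rhs => rw [← hR.isIdempotentElem.eq, mul_apply]
  simp only [hR.apply_symm, sq]

theorem IsStarProjection.diag_nonneg (hR : IsStarProjection R) (i : n) : 0 ≤ R i i :=
  hR.sum_apply_sq_eq_diag i ▸ Finset.sum_nonneg fun _ _ => sq_nonneg _

theorem IsStarProjection.apply_eq_zero_of_diag_eq_zero (hR : IsStarProjection R) {i : n}
    (hi : R i i = 0) (j : n) : R i j = 0 := by
  have := hR.sum_apply_sq_eq_diag i
  rw [hi, Finset.sum_eq_zero_iff_of_nonneg fun j _ => sq_nonneg _] at this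
  exact pow_eq_zero_iff two_ne_zero |>.mp (this j (Finset.mem_univ j))

variable [DecidableEq n]

theorem IsStarProjection.diag_le_one (hR : IsStarProjection R) (i : n) : R i i ≤ 1 := by
  simpa using hR.one_sub.diag_nonneg i

theorem IsStarProjection.apply_eq_one_apply_of_diag_eq_one (hR : IsStarProjection R) {i : n}
    (hi : R i i = 1) (j : n) : R i j = (1 : Matrix n n ℝ) i j := by
  have := hR.one_sub.apply_eq_zero_of_diag_eq_zero (i := i) (by simp [hi]) j
  rwa [Matrix.sub_apply, sub_eq_zero, eq_comm] at this

theorem IsStarProjection.mul_diagonal_eq_diagonal_indicator (hR : IsStarProjection R)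
    (s : Set n) {ν : n → ℝ} (hdiag : ∀ i, ν i ≠ 0 → R i i = s.indicator 1 i) :
    R * diagonal ν = diagonal (s.indicator ν) := by
  ext i j
  rw [mul_diagonal, diagonal_apply, ← hR.apply_symm]
  by_cases hj : ν j = 0
  · by_cases hij : i = j
    · subst hij
      simp [hj, Set.indicator_apply_eq_zero.mpr fun _ => hj]
    · simp [hij, hj]
  by_cases hjs : j ∈ s
  · rw [hR.apply_eq_one_apply_of_diag_eq_one (by simpa [hjs] using hdiag j hj)]
    by_cases hij : i = j
    · subst hij
      simp [hjs]
    · simp [hij, Ne.symm hij]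
  · rw [hR.apply_eq_zero_of_diag_eq_zero (by simpa [hjs] using hdiag j hj)]
    by_cases hij : i = j <;> simp [hij, hjs]

theorem IsStarProjection.commute_diagonal_of_mul_diagonal_eq (hR : IsStarProjection R)
    {ν ν' : n → ℝ} (h : R * diagonal ν = diagonal ν') : Commute R (diagonal ν) := by
  have := congrArg transpose h
  rw [transpose_mul, diagonal_transpose, diagonal_transpose, ← h, hR.transpose_eq] at this
  exact this.symm

end StarProjection

section Threshold

variable {ι : Type*} [DecidableEq ι] {μ π : ι → ℝ} {t : ℝ} {S : Finset ι}

theorem sub_mul_sub_ite_nonpos (hπ : ∀ i, 0 ≤ π i ∧ π i ≤ 1) (hS : ∀ i ∈ S, t ≤ μ i)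
    (hSc : ∀ i ∉ S, μ i ≤ t) (i : ι) : (μ i - t) * (π i - if i ∈ S then 1 else 0) ≤ 0 := by
  by_cases hi : i ∈ S
  · rw [if_pos hi]
    exact mul_nonpos_of_nonneg_of_nonpos (by linarith [hS i hi]) (by linarith [(hπ i).2])
  · rw [if_neg hi]
    exact mul_nonpos_of_nonpos_of_nonneg (by linarith [hSc i hi]) (by linarith [(hπ i).1])

variable [Fintype ι]

theorem sum_sub_mul_sub_ite (hsum : ∑ i, π i = S.card) :
    ∑ i, (μ i - t) * (π i - if i ∈ S then 1 else 0) = ∑ i, μ i * π i - ∑ i ∈ S, μ i := by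
  simp only [sub_mul, mul_sub, Finset.sum_sub_distrib, ← Finset.mul_sum, hsum]
  simp

theorem sum_mul_le_sum_of_threshold (hπ : ∀ i, 0 ≤ π i ∧ π i ≤ 1)
    (hS : ∀ i ∈ S, t ≤ μ i) (hSc : ∀ i ∉ S, μ i ≤ t) (hsum : ∑ i, π i = S.card) :
    ∑ i, μ i * π i ≤ ∑ i ∈ S, μ i := by
  have := Finset.sum_nonpos fun i (_ : i ∈ Finset.univ) => sub_mul_sub_ite_nonpos hπ hS hSc i
  rw [sum_sub_mul_sub_ite hsum] at this
  linarith

theorem eq_of_sum_mul_eq_sum_of_threshold (hπ : ∀ i, 0 ≤ π i ∧ π i ≤ 1)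
    (hS : ∀ i ∈ S, t ≤ μ i) (hSc : ∀ i ∉ S, μ i ≤ t) (hsum : ∑ i, π i = S.card)
    (heq : ∑ i, μ i * π i = ∑ i ∈ S, μ i) {i : ι} (hi : μ i ≠ t) :
    π i = if i ∈ S then 1 else 0 := by
  have hzero := sum_sub_mul_sub_ite (μ := μ) (t := t) hsum
  rw [heq, sub_self,
    Finset.sum_eq_zero_iff_of_nonpos fun i _ => sub_mul_sub_ite_nonpos hπ hS hSc i] at hzero
  rcases mul_eq_zero.mp (hzero i (Finset.mem_univ i)) with h | h
  · exact absurd (sub_eq_zero.mp h) hi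
  · exact sub_eq_zero.mp h

end Threshold

namespace Matrix

section Orthonormal

variable {m n : Type*} [Fintype m] [Fintype n] [DecidableEq m] {Q : Matrix n m ℝ}

theorem isStarProjection_mul_transpose_self (hQ : Qᵀ * Q = 1) :
    IsStarProjection (Q * Qᵀ) where
  isIdempotentElem := by
    rw [IsIdempotentElem, Matrix.mul_assoc, ← Matrix.mul_assoc Qᵀ, hQ, Matrix.one_mul]
  isSelfAdjoint := by simp [IsSelfAdjoint, star_eq_conjTranspose]

theorem sum_diag_mul_transpose_self (hQ : Qᵀ * Q = 1) :
    ∑ i, (Q * Qᵀ) i i = Fintype.card m := by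
  rw [show ∑ i, (Q * Qᵀ) i i = (Q * Qᵀ).trace from rfl, trace_mul_comm, hQ, trace_one]

theorem mul_eq_mul_transpose_mul_of_commute (hQ : Qᵀ * Q = 1) {D : Matrix n n ℝ}
    (hD : Commute (Q * Qᵀ) D) : D * Q = Q * (Qᵀ * D * Q) := by
  calc D * Q = D * (Q * Qᵀ) * Q := by rw [Matrix.mul_assoc D, Matrix.mul_assoc, hQ, Matrix.mul_one]
    _ = Q * (Qᵀ * D * Q) := by rw [← hD.eq]; simp only [Matrix.mul_assoc]

end Orthonormal

section Selection

variable {m n α : Type*} [DecidableEq n] [Semiring α]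

theorem transpose_one_submatrix_mul_mul_one_submatrix [Fintype n] (M : Matrix n n α) (e : m → n) :
    ((1 : Matrix n n α).submatrix id e)ᵀ * M * (1 : Matrix n n α).submatrix id e =
      M.submatrix e e := by
  rw [transpose_submatrix, transpose_one, ← submatrix_id_id M,
    ← submatrix_mul _ _ _ _ _ Function.bijective_id, Matrix.one_mul,
    ← submatrix_mul _ _ _ _ _ Function.bijective_id, Matrix.mul_one, submatrix_submatrix]
  rfl

theorem transpose_one_submatrix_mul_one_submatrix [Fintype n] [DecidableEq m] {e : m → n}
    (he : Function.Injective e) :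
    ((1 : Matrix n n α).submatrix id e)ᵀ * (1 : Matrix n n α).submatrix id e = 1 := by
  rw [← Matrix.mul_one (_ᵀ), transpose_one_submatrix_mul_mul_one_submatrix, submatrix_one _ he]

theorem trace_transpose_one_submatrix_mul_diagonal_mul [Fintype n] [Fintype m] [DecidableEq m]
    {e : m → n} (he : Function.Injective e) (μ : n → α) :
    (((1 : Matrix n n α).submatrix id e)ᵀ * diagonal μ * (1 : Matrix n n α).submatrix id e).trace =
      ∑ k, μ (e k) := by
  rw [transpose_one_submatrix_mul_mul_one_submatrix, submatrix_diagonal _ _ he, trace_diagonal]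
  rfl

theorem one_submatrix_mul_diagonal_mul_transpose [Fintype m] [DecidableEq m] {e : m → n}
    (he : Function.Injective e) (ν : n → α) :
    (1 : Matrix n n α).submatrix id e * diagonal (ν ∘ e) * ((1 : Matrix n n α).submatrix id e)ᵀ =
      diagonal ((Set.range e).indicator ν) := by
  ext i j
  rw [mul_apply]
  simp only [mul_diagonal, submatrix_apply, transpose_apply, id, one_apply, Function.comp_apply]
  by_cases hi : i ∈ Set.range e
  · obtain ⟨k, rfl⟩ := hi
    rw [Finset.sum_eq_single k (fun l _ hl => by simp [he.ne hl.symm]) (by simp),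
      diagonal_apply, Set.indicator_of_mem (Set.mem_range_self k)]
    by_cases hkj : e k = j
    · simp [hkj]
    · simp [hkj, Ne.symm hkj]
  · rw [Finset.sum_eq_zero (fun l _ => by simp [show i ≠ e l from fun h => hi ⟨l, h.symm⟩]),
      diagonal_apply, Set.indicator_of_notMem hi]
    simp

end Selection

theorem exists_orthogonal_mul_diagonal_mul_transpose_eq {n : Type*} [Fintype n]
    [DecidableEq n] (G : Matrix n n ℝ) (δ : n → ℝ)
    (hG : ∀ k l, δ k ≠ 0 → δ l ≠ 0 → (Gᵀ * G) k l = (1 : Matrix n n ℝ) k l) :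
    ∃ W : Matrix n n ℝ, Wᵀ * W = 1 ∧ W * diagonal δ * Wᵀ = G * diagonal δ * Gᵀ := by
  let col : n → EuclideanSpace ℝ n := fun k => WithLp.toLp 2 fun i => G i k
  have hcol : Orthonormal ℝ (({k | δ k ≠ 0} : Set n).domRestrict col) := by
    rw [orthonormal_iff_ite]
    rintro ⟨k, hk⟩ ⟨l, hl⟩
    have := hG k l hk hl
    simp only [mul_apply, transpose_apply, one_apply] at this
    simp [col, PiLp.inner_apply, Subtype.ext_iff, ← this, mul_comm]
  obtain ⟨b, hb⟩ := hcol.exists_orthonormalBasis_extension_of_card_eq (by simp)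
  let W : Matrix n n ℝ := of fun i k => b k i
  have hWG : W * diagonal δ = G * diagonal δ := by
    ext i k
    rw [mul_diagonal, mul_diagonal]
    by_cases hk : δ k = 0
    · simp [hk]
    · simp [W, hb k hk, col]
  refine ⟨W, ?_, ?_⟩
  · ext k l
    have := orthonormal_iff_ite.mp b.orthonormal k l
    simp only [PiLp.inner_apply] at this
    simp [W, mul_apply, ← this, one_apply, mul_comm]
  · calc W * diagonal δ * Wᵀ = G * (W * diagonal δ)ᵀ := by
          rw [transpose_mul, diagonal_transpose, ← Matrix.mul_assoc, hWG]
      _ = G * diagonal δ * Gᵀ := by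
          rw [hWG, transpose_mul, diagonal_transpose, Matrix.mul_assoc]

theorem trace_transpose_mul_sub_smul_mul {m n : Type*} [Fintype m] [Fintype n] [DecidableEq m]
    {A B : Matrix n n ℝ} (hB : B.PosDef) {P : Matrix n m ℝ} (hP : Pᵀ * P = 1) (c : ℝ) :
    (Pᵀ * (A - c • B) * P).trace =
      (Pᵀ * B * P).trace * ((Pᵀ * A * P).trace / (Pᵀ * B * P).trace - c) := by
  rcases isEmpty_or_nonempty m with _ | _
  · simp [trace_eq_zero_of_isEmpty]
  have hinj : Function.Injective P.mulVec :=
    Function.LeftInverse.injective (g := (Pᵀ *ᵥ ·)) fun x => by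
      simp only [mulVec_mulVec, hP, one_mulVec]
  have hpos : 0 < (Pᵀ * B * P).trace := by
    simpa using (hB.conjTranspose_mul_mul_same hinj).trace_pos
  rw [mul_sub, mul_div_cancel₀ _ hpos.ne', Matrix.mul_sub, Matrix.sub_mul, trace_sub,
    Matrix.mul_smul, Matrix.smul_mul, trace_smul, smul_eq_mul, mul_comm c]

theorem trace_transpose_mul_sub_smul_mul_nonpos {m n : Type*} [Fintype m] [Fintype n]
    [DecidableEq m] {A B : Matrix n n ℝ} (hB : B.PosDef) {P : Matrix n m ℝ} (hP : Pᵀ * P = 1)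
    {c : ℝ} (hc : (Pᵀ * A * P).trace / (Pᵀ * B * P).trace ≤ c) :
    (Pᵀ * (A - c • B) * P).trace ≤ 0 := by
  rw [trace_transpose_mul_sub_smul_mul hB hP]
  refine mul_nonpos_of_nonneg_of_nonpos ?_ (sub_nonpos.mpr hc)
  simpa using (hB.posSemidef.conjTranspose_mul_mul_same P).trace_nonneg

theorem diagonal_eq_diagonal_sub_add_smul_one {n : Type*} [DecidableEq n] (μ : n → ℝ) (t : ℝ) :
    diagonal μ = diagonal (fun i => μ i - t) + t • (1 : Matrix n n ℝ) := by
  rw [smul_one_eq_diagonal, diagonal_add]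
  simp

section KyFan

variable {m n : Type*} [Fintype m] [Fintype n] [DecidableEq n]

theorem trace_transpose_mul_diagonal_mul (Q : Matrix n m ℝ) (μ : n → ℝ) :
    (Qᵀ * diagonal μ * Q).trace = ∑ i, μ i * (Q * Qᵀ) i i := by
  rw [trace_mul_cycle]
  simp [trace, mul_diagonal, mul_comm]

variable [DecidableEq m] {μ : n → ℝ} {e : m → n} {t : ℝ} {Q : Matrix n m ℝ}

theorem trace_transpose_mul_diagonal_mul_le (he : Function.Injective e)
    (ht_top : ∀ k, t ≤ μ (e k)) (ht_rest : ∀ i ∉ Set.range e, μ i ≤ t) (hQ : Qᵀ * Q = 1) :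
    (Qᵀ * diagonal μ * Q).trace ≤ ∑ k, μ (e k) := by
  have hR := isStarProjection_mul_transpose_self hQ
  have := sum_mul_le_sum_of_threshold (S := Finset.univ.map ⟨e, he⟩)
    (fun i => ⟨hR.diag_nonneg i, hR.diag_le_one i⟩) (by simpa using ht_top)
    (by simpa using ht_rest) (by simp [sum_diag_mul_transpose_self hQ])
  simpa [trace_transpose_mul_diagonal_mul] using this

theorem diag_mul_transpose_eq_indicator_of_sum_le_trace (he : Function.Injective e)
    (ht_top : ∀ k, t ≤ μ (e k)) (ht_rest : ∀ i ∉ Set.range e, μ i ≤ t) (hQ : Qᵀ * Q = 1)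
    (hle : ∑ k, μ (e k) ≤ (Qᵀ * diagonal μ * Q).trace) {i : n} (hi : μ i ≠ t) :
    (Q * Qᵀ) i i = (Set.range e).indicator 1 i := by
  have hR := isStarProjection_mul_transpose_self hQ
  have heq := le_antisymm (trace_transpose_mul_diagonal_mul_le he ht_top ht_rest hQ) hle
  have := eq_of_sum_mul_eq_sum_of_threshold (S := Finset.univ.map ⟨e, he⟩)
    (fun i => ⟨hR.diag_nonneg i, hR.diag_le_one i⟩) (by simpa using ht_top)
    (by simpa using ht_rest) (by simp [sum_diag_mul_transpose_self hQ])
    (by simpa [trace_transpose_mul_diagonal_mul] using heq) hi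
  simpa [Set.indicator_apply] using this

theorem mul_transpose_mul_diagonal_sub_eq_of_sum_le_trace (he : Function.Injective e)
    (ht_top : ∀ k, t ≤ μ (e k)) (ht_rest : ∀ i ∉ Set.range e, μ i ≤ t) (hQ : Qᵀ * Q = 1)
    (hle : ∑ k, μ (e k) ≤ (Qᵀ * diagonal μ * Q).trace) :
    Q * Qᵀ * diagonal (fun i => μ i - t) =
      diagonal ((Set.range e).indicator fun i => μ i - t) :=
  (isStarProjection_mul_transpose_self hQ).mul_diagonal_eq_diagonal_indicator _ fun _ hi =>
    diag_mul_transpose_eq_indicator_of_sum_le_trace he ht_top ht_rest hQ hle (sub_ne_zero.mp hi)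

theorem diagonal_mul_eq_of_sum_le_trace (he : Function.Injective e)
    (ht_top : ∀ k, t ≤ μ (e k)) (ht_rest : ∀ i ∉ Set.range e, μ i ≤ t) (hQ : Qᵀ * Q = 1)
    (hle : ∑ k, μ (e k) ≤ (Qᵀ * diagonal μ * Q).trace) :
    diagonal μ * Q = Q * (Qᵀ * diagonal μ * Q) := by
  refine mul_eq_mul_transpose_mul_of_commute hQ ?_
  have hcomm := (isStarProjection_mul_transpose_self hQ).commute_diagonal_of_mul_diagonal_eq
    (mul_transpose_mul_diagonal_sub_eq_of_sum_le_trace he ht_top ht_rest hQ hle)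
  rw [diagonal_eq_diagonal_sub_add_smul_one μ t]
  exact hcomm.add_right ((Commute.one_right _).smul_right t)

theorem exists_orthogonal_of_sum_le_trace (he : Function.Injective e)
    (ht_top : ∀ k, t ≤ μ (e k)) (ht_rest : ∀ i ∉ Set.range e, μ i ≤ t) (hQ : Qᵀ * Q = 1)
    (hle : ∑ k, μ (e k) ≤ (Qᵀ * diagonal μ * Q).trace) :
    ∃ W : Matrix m m ℝ, Wᵀ * W = 1 ∧ Qᵀ * diagonal μ * Q = W * diagonal (μ ∘ e) * Wᵀ := by
  set E := (1 : Matrix n n ℝ).submatrix id e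
  set G := Qᵀ * E
  have hR := isStarProjection_mul_transpose_self hQ
  have hG : ∀ k l, μ (e k) - t ≠ 0 → μ (e l) - t ≠ 0 → (Gᵀ * G) k l = (1 : Matrix m m ℝ) k l := by
    intro k l hk _
    have hdiag := diag_mul_transpose_eq_indicator_of_sum_le_trace he ht_top ht_rest hQ hle
      (sub_ne_zero.mp hk)
    rw [Set.indicator_of_mem (Set.mem_range_self k)] at hdiag
    rw [show Gᵀ * G = Eᵀ * (Q * Qᵀ) * E by simp only [G, transpose_mul, transpose_transpose,
        Matrix.mul_assoc], transpose_one_submatrix_mul_mul_one_submatrix, submatrix_apply,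
      hR.apply_eq_one_apply_of_diag_eq_one hdiag]
    simp [one_apply, he.eq_iff]
  obtain ⟨W, hW, hWG⟩ := exists_orthogonal_mul_diagonal_mul_transpose_eq G _ hG
  have hsel : E * diagonal (fun k => μ (e k) - t) * Eᵀ = Q * Qᵀ * diagonal (fun i => μ i - t) := by
    rw [mul_transpose_mul_diagonal_sub_eq_of_sum_le_trace he ht_top ht_rest hQ hle]
    exact one_submatrix_mul_diagonal_mul_transpose he (fun i => μ i - t)
  have hshift : Qᵀ * diagonal μ * Q = G * diagonal (fun k => μ (e k) - t) * Gᵀ + t • 1 := by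
    calc Qᵀ * diagonal μ * Q = Qᵀ * (Q * Qᵀ * diagonal (fun i => μ i - t)) * Q + t • 1 := by
          rw [diagonal_eq_diagonal_sub_add_smul_one μ t, Matrix.mul_add, Matrix.add_mul,
            Matrix.mul_smul, Matrix.mul_one, Matrix.smul_mul, hQ, ← Matrix.mul_assoc Qᵀ,
            ← Matrix.mul_assoc Qᵀ, hQ, Matrix.one_mul]
      _ = G * diagonal (fun k => μ (e k) - t) * Gᵀ + t • 1 := by
          rw [← hsel]
          simp only [G, transpose_mul, transpose_transpose, Matrix.mul_assoc]
  refine ⟨W, hW, ?_⟩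
  rw [hshift, ← hWG, diagonal_eq_diagonal_sub_add_smul_one (μ ∘ e) t, Matrix.mul_add,
    Matrix.add_mul, Matrix.mul_smul, Matrix.mul_one, Matrix.smul_mul, mul_eq_one_comm.mp hW]
  rfl

end KyFan

end Matrix

theorem Antitone.exists_threshold_castLE {d p : ℕ} (hp : p ≤ d) {μ : Fin d → ℝ}
    (hμ : Antitone μ) :
    ∃ t, (∀ k, t ≤ μ (Fin.castLE hp k)) ∧ ∀ i ∉ Set.range (Fin.castLE hp), μ i ≤ t := by
  cases p with
  | zero =>
    obtain ⟨t, ht⟩ := (Set.finite_range μ).bddAbove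
    exact ⟨t, fun k => k.elim0, fun i _ => ht ⟨i, rfl⟩⟩
  | succ p =>
    refine ⟨μ (Fin.castLE hp (Fin.last p)), fun k => hμ (Fin.le_iff_val_le_val.mpr ?_),
      fun i hi => hμ (Fin.le_iff_val_le_val.mpr ?_)⟩
    · exact Nat.lt_succ_iff.mp k.isLt
    · by_contra hlt
      exact hi ⟨⟨i, by simp only [Fin.val_castLE, Fin.val_last] at hlt; omega⟩, rfl⟩

theorem trace_ratio_maximizer_invariant_subspace_general
    (d p : ℕ) (hp : p ≤ d)
    (A B : Matrix (Fin d) (Fin d) ℝ)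
    (hB : B.PosDef)
    (q : Matrix (Fin d) (Fin p) ℝ → ℝ)
    (hq : q = fun P => (Pᵀ * A * P).trace / (Pᵀ * B * P).trace)
    (Pstar : Matrix (Fin d) (Fin p) ℝ) (hPs : Pstarᵀ * Pstar = 1)
    (hmax : ∀ P : Matrix (Fin d) (Fin p) ℝ, Pᵀ * P = 1 → q P ≤ q Pstar)
    (H : Matrix (Fin d) (Fin d) ℝ) (hH : H = A - q Pstar • B)
    (V : Matrix (Fin d) (Fin d) ℝ) (μ : Fin d → ℝ)
    (hV : Vᵀ * V = 1) (hμ : Antitone μ)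
    (hdec : H = V * Matrix.diagonal μ * Vᵀ) :
    ∃ Λ : Matrix (Fin p) (Fin p) ℝ,
      Λᵀ = Λ ∧ H * Pstar = Pstar * Λ ∧
      (∃ W : Matrix (Fin p) (Fin p) ℝ, Wᵀ * W = 1 ∧
        Λ = W * Matrix.diagonal (fun i => μ (Fin.castLE hp i)) * Wᵀ) ∧
      Λ.trace = 0 ∧ Λ.trace = ∑ i : Fin p, μ (Fin.castLE hp i) := by
  have hqP : ∀ P, q P = (Pᵀ * A * P).trace / (Pᵀ * B * P).trace := fun P => by rw [hq]
  have hVV : V * Vᵀ = 1 := mul_eq_one_comm.mp hV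
  have he := Fin.castLE_injective hp
  have hconj : ∀ P : Matrix (Fin d) (Fin p) ℝ,
      Pᵀ * H * P = (Vᵀ * P)ᵀ * diagonal μ * (Vᵀ * P) := fun P => by
    simp only [hdec, transpose_mul, transpose_transpose, Matrix.mul_assoc]
  set Q := Vᵀ * Pstar
  have hQ : Qᵀ * Q = 1 := by
    rw [← hPs, transpose_mul, transpose_transpose, Matrix.mul_assoc, ← Matrix.mul_assoc V, hVV,
      Matrix.one_mul]
  have hzero : (Qᵀ * diagonal μ * Q).trace = 0 := by
    rw [← hconj, hH, trace_transpose_mul_sub_smul_mul hB hPs, hqP, sub_self, mul_zero]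
  set E := (1 : Matrix (Fin d) (Fin d) ℝ).submatrix id (Fin.castLE hp)
  have htop : ∑ k, μ (Fin.castLE hp k) ≤ (Qᵀ * diagonal μ * Q).trace := by
    have hVE : (V * E)ᵀ * (V * E) = 1 := by
      rw [transpose_mul, Matrix.mul_assoc, ← Matrix.mul_assoc Vᵀ, hV, Matrix.one_mul,
        transpose_one_submatrix_mul_one_submatrix he]
    have := trace_transpose_mul_sub_smul_mul_nonpos hB hVE (c := q Pstar)
      (by rw [← hqP]; exact hmax _ hVE)
    rwa [← hH, hconj, ← Matrix.mul_assoc Vᵀ, hV, Matrix.one_mul,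
      trace_transpose_one_submatrix_mul_diagonal_mul he, ← hzero] at this
  obtain ⟨t, ht_top, ht_rest⟩ := hμ.exists_threshold_castLE hp
  obtain ⟨W, hW, hΛW⟩ := exists_orthogonal_of_sum_le_trace he ht_top ht_rest hQ htop
  refine ⟨Qᵀ * diagonal μ * Q, ?_, ?_, ⟨W, hW, hΛW⟩, hzero, ?_⟩
  · simp only [transpose_mul, transpose_transpose, diagonal_transpose, Matrix.mul_assoc]
  · rw [hdec, Matrix.mul_assoc, Matrix.mul_assoc,
      diagonal_mul_eq_of_sum_le_trace he ht_top ht_rest hQ htop, ← Matrix.mul_assoc V Q,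
      ← Matrix.mul_assoc V, hVV, Matrix.one_mul]
  · exact le_antisymm (trace_transpose_mul_diagonal_mul_le he ht_top ht_rest hQ) htop

/-- If `P*` maximizes the trace ratio `q(P) = tr(PᵀAP)/tr(PᵀBP)` over
orthonormal `P` (with `B` positive definite), then the columns of `P*` span an
invariant subspace of `H = A − q(P*)·B` associated with its `p` largest
eigenvalues: there is a symmetric `Λ` with `H P* = P* Λ` whose eigenvalues are
the `p` largest eigenvalues of `H`; in particular `tr Λ = 0` equals the sum of
the `p` largest eigenvalues of `H`. Here `H = V D(μ) Vᵀ` is an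
eigendecomposition with `V` orthogonal and `μ` decreasing. -/
theorem trace_ratio_maximizer_invariant_subspace
    (d p : ℕ) (hp : p ≤ d)
    (A B : Matrix (Fin d) (Fin d) ℝ)
    (hA : Aᵀ = A) (hB : B.PosDef)
    (q : Matrix (Fin d) (Fin p) ℝ → ℝ)
    (hq : q = fun P => (Pᵀ * A * P).trace / (Pᵀ * B * P).trace)
    (Pstar : Matrix (Fin d) (Fin p) ℝ) (hPs : Pstarᵀ * Pstar = 1)
    (hmax : ∀ P : Matrix (Fin d) (Fin p) ℝ, Pᵀ * P = 1 → q P ≤ q Pstar)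
    (H : Matrix (Fin d) (Fin d) ℝ) (hH : H = A - q Pstar • B)
    (V : Matrix (Fin d) (Fin d) ℝ) (μ : Fin d → ℝ)
    (hV : Vᵀ * V = 1) (hμ : Antitone μ)
    (hdec : H = V * Matrix.diagonal μ * Vᵀ) :
    ∃ Λ : Matrix (Fin p) (Fin p) ℝ,
      Λᵀ = Λ ∧ H * Pstar = Pstar * Λ ∧
      (∃ W : Matrix (Fin p) (Fin p) ℝ, Wᵀ * W = 1 ∧
        Λ = W * Matrix.diagonal (fun i => μ (Fin.castLE hp i)) * Wᵀ) ∧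
      Λ.trace = 0 ∧ Λ.trace = ∑ i : Fin p, μ (Fin.castLE hp i) :=
  trace_ratio_maximizer_invariant_subspace_general d p hp A B hB q hq Pstar hPs hmax H hH V μ hV hμ
    hdec
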